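/- Let 1/2<R<1 and φ₀∈(π−arcsin((1−R)/R), π), and let p=(R cos φ₀, −R sin φ₀), q=(R cos φ₀, R sin φ₀). Then there exist four solutions x_{int,1}, x_{int,2}, x_{ext,1}, x_{ext,2} of problem (K) (each on its own interval [−ω_i,ω_i]) with endpoints p,q such that: c_{x_{int,i}}>0 and |x_{int,i}(t)|<R for all t in the corresponding open intervals (i=1,2); c_{x_{ext,i}}<0 and |x_{ext,i}(t)|>R for all t in the corresponding open intervals (i=1,2); and |x_{ext,1}(0)|<|x_{ext,2}(0)| and |x_{int,1}(0)|>|x_{int,2}(0)|. -/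

import Mathlib

noncomputable section
open Set Real Filter
open scoped RealInnerProductSpace

/-- The Euclidean plane. -/
abbrev E2 := EuclideanSpace ℝ (Fin 2)

/-- The point (a, b) of the Euclidean plane. -/
def pt (a b : ℝ) : E2 := (WithLp.equiv 2 (Fin 2 → ℝ)).symm ![a, b]

/-- Velocity of a curve defined on the interval [-ω, ω]. -/
def vel (ω : ℝ) (x : ℝ → E2) (t : ℝ) : E2 := derivWithin x (Icc (-ω) ω) t

/-- Solution of the fixed-energy (h = -1) Kepler problem on [-ω, ω]:
a C² curve in ℝ² ∖ {0} with ẍ = -x/|x|³ on (-ω, ω) and (1/2)|ẋ|² - 1/|x| = -1 on [-ω, ω]. -/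
def IsKeplerSol (ω : ℝ) (x : ℝ → E2) : Prop :=
  0 < ω ∧ ContDiffOn ℝ 2 x (Icc (-ω) ω) ∧
  (∀ t ∈ Icc (-ω) ω, x t ≠ 0) ∧
  (∀ t ∈ Ioo (-ω) ω,
    derivWithin (vel ω x) (Icc (-ω) ω) t = -(‖x t‖ ^ 3)⁻¹ • x t) ∧
  (∀ t ∈ Icc (-ω) ω, (1/2) * ‖vel ω x t‖ ^ 2 - ‖x t‖⁻¹ = -1)

/-- Solution of problem (K) on [-ω, ω] with endpoints p, q. -/
def IsKeplerSolPQ (ω : ℝ) (p q : E2) (x : ℝ → E2) : Prop :=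
  IsKeplerSol ω x ∧ x (-ω) = p ∧ x ω = q

/-- Angular momentum c_x = x₁ẋ₂ - x₂ẋ₁ (a constant of motion, evaluated at t = 0). -/
def angMom (ω : ℝ) (x : ℝ → E2) : ℝ :=
  x 0 0 * vel ω x 0 1 - x 0 1 * vel ω x 0 0

lemma ptlin (a b : ℝ) : pt a b = a • pt 1 0 + b • pt 0 1 := by
  ext i; fin_cases i <;> simp [pt]
lemma norm_pt (a b : ℝ) : ‖pt a b‖ = Real.sqrt (a^2 + b^2) := by
  rw [EuclideanSpace.norm_eq]; simp [pt, Fin.sum_univ_two, sq]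
lemma smul_pt (s a b : ℝ) : s • pt a b = pt (s*a) (s*b) := by
  ext i; fin_cases i <;> simp [pt]
lemma hasDerivAt_pt {f g : ℝ → ℝ} {f' g' : ℝ} {t : ℝ} (hf : HasDerivAt f f' t)
    (hg : HasDerivAt g g' t) :
    HasDerivAt (fun t => pt (f t) (g t)) (pt f' g') t := by
  have h := (hf.smul_const (pt 1 0)).add (hg.smul_const (pt 0 1))
  have e1 : (fun t => pt (f t) (g t)) = (fun y => f y • pt 1 0) + fun y => g y • pt 0 1 := by
    funext t; exact ptlin (f t) (g t)
  rw [e1, ptlin f' g']; exact h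

lemma scalar1 (C S e d r2 : ℝ) (hd : d = 1 - e*C) (hdne : d ≠ 0) (hS : S^2 = 1 - C^2)
    (hr : r2^2 = 2) :
    (-(C*(2*r2/d))*(2*r2/d) + (-S)*((0*d - (2*r2)*(-(e*(-S*(2*r2/d)))))/d^2))/2
      = -(((d/2)^3)⁻¹) * ((C-e)/2) := by
  field_simp
  linear_combination (-4*C*d + 4*S^2*e) * hr + 8*e * hS + (-8*C) * hd

lemma scalar2 (C S e d b2 r2 : ℝ) (hd : d = 1 - e*C) (hdne : d ≠ 0)
    (hr : r2^2 = 2) :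
    b2 * ((-S*(2*r2/d)) * (2*r2/d) + C * ((0*d - (2*r2)*(-(e*(-S*(2*r2/d)))))/d^2)) / 2
      = -(((d/2)^3)⁻¹) * (b2 * S / 2) := by
  field_simp
  linear_combination (-4*b2*S*d - 4*b2*S*C*e)*hr + (-8*b2*S)*hd

lemma scalar3 (C S e d b2 r2 : ℝ) (hd : d = 1 - e*C) (hdne : d ≠ 0) (hS : S^2 = 1 - C^2)
    (hr : r2^2 = 2) (hb : b2^2 = 1 - e^2) :
    (1/2) * ((-(S)*(2*r2/d)/2)^2 + (b2*(C*(2*r2/d))/2)^2) - ((d/2))⁻¹ = -1 := by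
  field_simp
  linear_combination (S^2 + b2^2*C^2)*hr + 2*C^2*hb + 2*hS + (-2*(1-d+e*C))*hd

lemma scalar4 (C S e b2 : ℝ) (hS : S^2 = 1 - C^2) (hb : b2^2 = 1 - e^2) :
    ((C-e)/2)^2 + (b2*S/2)^2 = ((1-e*C)/2)^2 := by
  linear_combination (S^2/4)*hb + ((1-e^2)/4)*hS

def kg (e u : ℝ) : ℝ := (u - e * Real.sin u) / (2 * Real.sqrt 2)
def ku (e : ℝ) : ℝ → ℝ := Function.invFun (kg e)

lemma sqrt2_pos : (0:ℝ) < 2 * Real.sqrt 2 := by positivity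

lemma hasDerivAt_kg (e u : ℝ) :
    HasDerivAt (kg e) ((1 - e * Real.cos u) / (2 * Real.sqrt 2)) u := by
  have h : HasDerivAt (fun u => (u - e * Real.sin u)) (1 - e * Real.cos u) u :=
    (hasDerivAt_id u).sub ((Real.hasDerivAt_sin u).const_mul e)
  exact h.div_const _

section
variable {e : ℝ} (he0 : 0 < e) (he1 : e < 1)
include he0 he1

lemma kg_denom_pos (u : ℝ) : 0 < 1 - e * Real.cos u := by
  nlinarith [Real.cos_le_one u, Real.neg_one_le_cos u]

lemma kg_strictMono : StrictMono (kg e) := by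
  apply strictMono_of_deriv_pos
  intro u
  rw [(hasDerivAt_kg e u).deriv]
  exact div_pos (kg_denom_pos he0 he1 u) sqrt2_pos

lemma kg_surj : Function.Surjective (kg e) := by
  have hc : Continuous (kg e) := by unfold kg; fun_prop
  apply hc.surjective
  · apply tendsto_atTop_mono (f := fun u => (u - 1) / (2*Real.sqrt 2))
    · intro u
      have h1 : e * Real.sin u ≤ 1 := by
        nlinarith [Real.sin_le_one u, Real.neg_one_le_sin u]
      unfold kg
      gcongr <;> linarith
    · exact (tendsto_atTop_add_const_right _ (-1) tendsto_id).atTop_div_const sqrt2_pos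
  · apply tendsto_atBot_mono (f := fun u => (u + 1) / (2*Real.sqrt 2))
    · intro u
      have h1 : -1 ≤ e * Real.sin u := by
        nlinarith [Real.sin_le_one u, Real.neg_one_le_sin u]
      unfold kg
      gcongr <;> linarith
    · exact (tendsto_atBot_add_const_right _ 1 tendsto_id).atBot_div_const sqrt2_pos

lemma ku_left (v : ℝ) : ku e (kg e v) = v :=
  Function.leftInverse_invFun (kg_strictMono he0 he1).injective v

lemma ku_right (t : ℝ) : kg e (ku e t) = t :=
  Function.rightInverse_invFun (kg_surj he0 he1) t

lemma ku_strictMono : StrictMono (ku e) := by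
  intro t1 t2 h
  by_contra hle
  push_neg at hle
  have := (kg_strictMono he0 he1).monotone hle
  rw [ku_right he0 he1, ku_right he0 he1] at this
  linarith

lemma ku_continuous : Continuous (ku e) :=
  (ku_strictMono he0 he1).monotone.continuous_of_surjective
    (fun v => ⟨kg e v, ku_left he0 he1 v⟩)

lemma ku_hasDerivAt (t : ℝ) :
    HasDerivAt (ku e) (2 * Real.sqrt 2 / (1 - e * Real.cos (ku e t))) t := by
  have h := HasDerivAt.of_local_left_inverse ((ku_continuous he0 he1).continuousAt)
    (hasDerivAt_kg e (ku e t))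
    (ne_of_gt (div_pos (kg_denom_pos he0 he1 _) sqrt2_pos))
    (Filter.Eventually.of_forall (ku_right he0 he1))
  rwa [inv_div] at h

lemma ku_deriv : deriv (ku e) = fun t => 2 * Real.sqrt 2 / (1 - e * Real.cos (ku e t)) := by
  funext t; exact (ku_hasDerivAt he0 he1 t).deriv

lemma ku_contDiff : ContDiff ℝ 2 (ku e) := by
  have hd : Differentiable ℝ (ku e) := fun t => (ku_hasDerivAt he0 he1 t).differentiableAt
  have hne : ∀ s : ℝ, 1 - e * Real.cos s ≠ 0 := fun s => ne_of_gt (kg_denom_pos he0 he1 s)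
  have haux : ContDiff ℝ 1 (fun s : ℝ => 2 * Real.sqrt 2 / (1 - e * Real.cos s)) := by
    apply ContDiff.div contDiff_const
    · exact contDiff_const.sub (contDiff_const.mul Real.contDiff_cos)
    · exact hne
  have h1 : ContDiff ℝ 1 (ku e) := by
    rw [contDiff_one_iff_deriv]
    refine ⟨hd, ?_⟩
    rw [ku_deriv he0 he1]
    exact (haux.continuous).comp (ku_continuous he0 he1)
  rw [show (2 : WithTop ℕ∞) = 1 + 1 by norm_num, contDiff_succ_iff_deriv]
  refine ⟨hd, by simp, ?_⟩
  rw [ku_deriv he0 he1]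
  exact haux.comp h1

end

def kX (e : ℝ) : ℝ → E2 := fun t =>
  pt ((Real.cos (ku e t) - e)/2) (Real.sqrt (1-e^2) * Real.sin (ku e t) / 2)

def kV (e : ℝ) : ℝ → E2 := fun t =>
  pt (-Real.sin (ku e t) * (2*Real.sqrt 2 / (1 - e * Real.cos (ku e t))) / 2)
     (Real.sqrt (1-e^2) * (Real.cos (ku e t) * (2*Real.sqrt 2 / (1 - e * Real.cos (ku e t)))) / 2)

section
variable {e : ℝ} (he0 : 0 < e) (he1 : e < 1)
include he0 he1

lemma hb2 : (Real.sqrt (1-e^2))^2 = 1 - e^2 := Real.sq_sqrt (by nlinarith)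
lemma hr2 : (Real.sqrt 2)^2 = 2 := Real.sq_sqrt (by norm_num)

lemma kX_norm (t : ℝ) : ‖kX e t‖ = (1 - e * Real.cos (ku e t))/2 := by
  unfold kX
  rw [norm_pt, show ((Real.cos (ku e t) - e)/2)^2 + (Real.sqrt (1-e^2) * Real.sin (ku e t) / 2)^2
      = ((1 - e * Real.cos (ku e t))/2)^2 from by
    linear_combination scalar4 (Real.cos (ku e t)) (Real.sin (ku e t)) e (Real.sqrt (1-e^2))
      (Real.sin_sq (ku e t)) (hb2 he0 he1)]
  exact Real.sqrt_sq (by linarith [kg_denom_pos he0 he1 (ku e t)])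

lemma kX_ne (t : ℝ) : kX e t ≠ 0 := by
  intro h
  have h2 := kX_norm he0 he1 t
  rw [h, norm_zero] at h2
  have := kg_denom_pos he0 he1 (ku e t)
  linarith

lemma kXV (t : ℝ) : HasDerivAt (kX e) (kV e t) t := by
  have h1 := ku_hasDerivAt he0 he1 t
  have hC : HasDerivAt (fun s => Real.cos (ku e s))
      (-Real.sin (ku e t) * (2*Real.sqrt 2 / (1 - e * Real.cos (ku e t)))) t :=
    (Real.hasDerivAt_cos (ku e t)).comp t h1
  have hS : HasDerivAt (fun s => Real.sin (ku e s))
      (Real.cos (ku e t) * (2*Real.sqrt 2 / (1 - e * Real.cos (ku e t)))) t :=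
    (Real.hasDerivAt_sin (ku e t)).comp t h1
  exact hasDerivAt_pt ((hC.sub_const e).div_const 2)
    ((hS.const_mul (Real.sqrt (1-e^2))).div_const 2)

lemma kV_deriv (t : ℝ) : HasDerivAt (kV e) (-(‖kX e t‖^3)⁻¹ • kX e t) t := by
  have h1 := ku_hasDerivAt he0 he1 t
  have hC : HasDerivAt (fun s => Real.cos (ku e s))
      (-Real.sin (ku e t) * (2*Real.sqrt 2 / (1 - e * Real.cos (ku e t)))) t :=
    (Real.hasDerivAt_cos (ku e t)).comp t h1
  have hS : HasDerivAt (fun s => Real.sin (ku e s))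
      (Real.cos (ku e t) * (2*Real.sqrt 2 / (1 - e * Real.cos (ku e t)))) t :=
    (Real.hasDerivAt_sin (ku e t)).comp t h1
  have hden : HasDerivAt (fun s => 1 - e * Real.cos (ku e s))
      (-(e * (-Real.sin (ku e t) * (2*Real.sqrt 2 / (1 - e * Real.cos (ku e t)))))) t :=
    (hC.const_mul e).const_sub 1
  have hkup := (hasDerivAt_const t (2*Real.sqrt 2)).div hden
    (ne_of_gt (kg_denom_pos he0 he1 (ku e t)))
  have hV1 := ((hS.neg).mul hkup).div_const 2
  have hV2 := ((hC.mul hkup).const_mul (Real.sqrt (1-e^2))).div_const 2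
  have hfull := hasDerivAt_pt hV1 hV2
  rw [kX_norm he0 he1 t]
  unfold kX
  rw [smul_pt]
  set C := Real.cos (ku e t)
  set S := Real.sin (ku e t)
  set d := 1 - e * C with hd
  have hdne : d ≠ 0 := ne_of_gt (kg_denom_pos he0 he1 (ku e t))
  have e1 := scalar1 C S e d (Real.sqrt 2) hd hdne (Real.sin_sq (ku e t)) (hr2 he0 he1)
  have e2 := scalar2 C S e d (Real.sqrt (1-e^2)) (Real.sqrt 2) hd hdne (hr2 he0 he1)
  convert hfull using 2
  · rfl
  · exact e1.symm
  · exact e2.symm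

lemma kX_contDiff : ContDiff ℝ 2 (kX e) := by
  have hk := ku_contDiff he0 he1
  have h1 : ContDiff ℝ 2 (fun t => (Real.cos (ku e t) - e)/2) :=
    ((Real.contDiff_cos.comp hk).sub contDiff_const).div_const 2
  have h2 : ContDiff ℝ 2 (fun t => Real.sqrt (1-e^2) * Real.sin (ku e t) / 2) :=
    ((contDiff_const.mul (Real.contDiff_sin.comp hk))).div_const 2
  have : kX e = fun t => ((Real.cos (ku e t) - e)/2) • pt 1 0
      + (Real.sqrt (1-e^2) * Real.sin (ku e t) / 2) • pt 0 1 := by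
    funext t; exact ptlin _ _
  rw [this]
  exact (h1.smul contDiff_const).add (h2.smul contDiff_const)

lemma kEnergy (t : ℝ) : (1/2) * ‖kV e t‖^2 - ‖kX e t‖⁻¹ = -1 := by
  rw [kX_norm he0 he1 t]
  have hnv : ‖kV e t‖^2 = (-Real.sin (ku e t) * (2*Real.sqrt 2 / (1 - e * Real.cos (ku e t))) / 2)^2
      + (Real.sqrt (1-e^2) * (Real.cos (ku e t) * (2*Real.sqrt 2 / (1 - e * Real.cos (ku e t)))) / 2)^2 := by
    unfold kV
    rw [norm_pt]
    exact Real.sq_sqrt (by positivity)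
  rw [hnv]
  set C := Real.cos (ku e t)
  set S := Real.sin (ku e t)
  set d := 1 - e * C with hd
  have hdne : d ≠ 0 := ne_of_gt (kg_denom_pos he0 he1 (ku e t))
  linear_combination scalar3 C S e d (Real.sqrt (1-e^2)) (Real.sqrt 2) hd hdne
    (Real.sin_sq (ku e t)) (hr2 he0 he1) (hb2 he0 he1)

end
lemma arc_sol (X V : ℝ → E2) (hC : ContDiff ℝ 2 X)
    (hXV : ∀ t, HasDerivAt X (V t) t)
    (hVd : ∀ t, HasDerivAt V (-(‖X t‖^3)⁻¹ • X t) t)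
    (h0 : ∀ t, X t ≠ 0)
    (hE : ∀ t, (1/2)*‖V t‖^2 - ‖X t‖⁻¹ = -1)
    (ε c ω : ℝ) (hε : ε = 1 ∨ ε = -1) (hω : 0 < ω) :
    IsKeplerSol ω (fun t => X (ε*t + c)) ∧
    ∀ t ∈ Icc (-ω) ω, vel ω (fun t => X (ε*t + c)) t = ε • V (ε*t + c) := by
  have hε2 : ε * ε = 1 := by rcases hε with h|h <;> rw [h] <;> norm_num
  have hεabs : ‖ε‖ = 1 := by rcases hε with h|h <;> rw [h] <;> simp
  have hσ : ∀ t : ℝ, HasDerivAt (fun s : ℝ => ε*s+c) ε t := by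
    intro t
    simpa using ((hasDerivAt_id t).const_mul ε).add_const c
  have hder : ∀ t : ℝ, HasDerivAt (fun s => X (ε*s+c)) (ε • V (ε*t+c)) t := by
    intro t
    exact (hXV (ε*t+c)).scomp t (hσ t)
  have hUD : UniqueDiffOn ℝ (Icc (-ω) ω) := uniqueDiffOn_Icc (by linarith)
  have hvel : ∀ t ∈ Icc (-ω) ω, vel ω (fun t => X (ε*t + c)) t = ε • V (ε*t+c) := by
    intro t ht
    exact (hder t).hasDerivWithinAt.derivWithin (hUD t ht)
  refine ⟨⟨hω, ?_, fun t _ => h0 _, ?_, ?_⟩, hvel⟩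
  · have hφ : ContDiff ℝ 2 (fun s : ℝ => ε*s+c) :=
      (contDiff_const.mul contDiff_id).add contDiff_const
    exact (hC.comp hφ).contDiffOn
  · intro t ht
    have ht' : t ∈ Icc (-ω) ω := Ioo_subset_Icc_self ht
    have heq : EqOn (vel ω (fun t => X (ε*t + c))) (fun t => ε • V (ε*t+c)) (Icc (-ω) ω) :=
      fun s hs => hvel s hs
    rw [derivWithin_congr heq (hvel t ht')]
    have h2 : HasDerivAt (fun s => ε • V (ε*s+c))
        (ε • (ε • (-(‖X (ε*t+c)‖^3)⁻¹ • X (ε*t+c)))) t :=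
      ((hVd (ε*t+c)).scomp t (hσ t)).const_smul ε
    rw [h2.hasDerivWithinAt.derivWithin (hUD t ht'), smul_smul, hε2, one_smul]
  · intro t ht
    rw [hvel t ht, norm_smul, hεabs, one_mul]
    exact hE _

lemma pt_apply0' (a b : ℝ) : pt a b 0 = a := rfl
lemma pt_apply1' (a b : ℝ) : pt a b 1 = b := rfl
lemma pt_congr {a b c d : ℝ} (h1 : a = c) (h2 : b = d) : pt a b = pt c d := by rw [h1, h2]

set_option maxHeartbeats 1000000 in
lemma arcs_for_e (R φ₀ e : ℝ) (hR1 : 1/2 < R) (hR2 : R < 1)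
    (hsin : 0 < Real.sin φ₀)
    (he0 : 0 < e) (he1 : e < 1) (he2 : 2*R - 1 < e)
    (hquad : e^2 + 2*R*Real.cos φ₀*e + 2*R - 1 = 0) :
    ∃ (ω ω' : ℝ) (xint xext : ℝ → E2),
      0 < ω ∧ 0 < ω' ∧
      IsKeplerSolPQ ω (pt (R*Real.cos φ₀) (-(R*Real.sin φ₀)))
        (pt (R*Real.cos φ₀) (R*Real.sin φ₀)) xint ∧
      IsKeplerSolPQ ω' (pt (R*Real.cos φ₀) (-(R*Real.sin φ₀)))
        (pt (R*Real.cos φ₀) (R*Real.sin φ₀)) xext ∧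
      0 < angMom ω xint ∧ angMom ω' xext < 0 ∧
      (∀ t ∈ Ioo (-ω) ω, ‖xint t‖ < R) ∧
      (∀ t ∈ Ioo (-ω') ω', R < ‖xext t‖) ∧
      ‖xint 0‖ = (1-e)/2 ∧ ‖xext 0‖ = (1+e)/2 := by
  have hR0 : (0:ℝ) < R := by linarith
  have hb2' : (Real.sqrt (1-e^2))^2 = 1 - e^2 := hb2 he0 he1
  have hb2pos : 0 < Real.sqrt (1-e^2) := Real.sqrt_pos.mpr (by nlinarith)
  set u₀ := Real.arccos ((1-2*R)/e) with hu₀def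
  have harg1 : -1 < (1-2*R)/e := by rw [lt_div_iff₀ he0]; nlinarith
  have harg2 : (1-2*R)/e ≤ 0 := div_nonpos_of_nonpos_of_nonneg (by linarith) he0.le
  have hcu : Real.cos u₀ = (1-2*R)/e := Real.cos_arccos harg1.le (by linarith)
  have hu0pos : 0 < u₀ := Real.arccos_pos.mpr (by linarith)
  have hu0pi : u₀ < π := lt_of_le_of_ne (Real.arccos_le_pi _)
    (fun h => by rw [Real.arccos_eq_pi] at h; linarith)
  have hsu : 0 < Real.sin u₀ := Real.sin_pos_of_pos_of_lt_pi hu0pos hu0pi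
  set ω := kg e u₀ with hωdef
  set Th := kg e π with hThdef
  have hω : 0 < ω := by
    have h1 : Real.sin u₀ < u₀ := Real.sin_lt hu0pos
    have h2 : 0 < u₀ - e * Real.sin u₀ := by nlinarith
    exact div_pos h2 sqrt2_pos
  have hωTh : ω < Th := (kg_strictMono he0 he1) hu0pi
  set ω' := Th - ω with hω'def
  have hω' : 0 < ω' := by rw [hω'def]; linarith
  have hg0 : kg e 0 = 0 := by unfold kg; simp
  have hku0 : ku e 0 = 0 := by have h := ku_left he0 he1 0; rwa [hg0] at h
  have hkuω : ku e ω = u₀ := ku_left he0 he1 u₀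
  have hgneg : kg e (-u₀) = -ω := by rw [hωdef]; unfold kg; rw [Real.sin_neg]; ring
  have hkunegω : ku e (-ω) = -u₀ := by rw [← hgneg]; exact ku_left he0 he1 _
  have hkuTh : ku e Th = π := ku_left he0 he1 π
  have hg2 : kg e (2*π - u₀) = 2*Th - ω := by
    rw [hωdef, hThdef]; unfold kg
    rw [Real.sin_sub, Real.sin_two_pi, Real.cos_two_pi, Real.sin_pi]; ring
  have hku2 : ku e (2*Th - ω) = 2*π - u₀ := by rw [← hg2]; exact ku_left he0 he1 _
  have hrR : (1 - e * Real.cos u₀)/2 = R := by rw [hcu]; field_simp; ring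
  have hx1 : (Real.cos u₀ - e)/2 = R * Real.cos φ₀ := by
    rw [hcu]; field_simp; linear_combination -hquad
  have hx2 : Real.sqrt (1-e^2) * Real.sin u₀ / 2 = R * Real.sin φ₀ := by
    have h1 := scalar4 (Real.cos u₀) (Real.sin u₀) e (Real.sqrt (1-e^2))
      (Real.sin_sq u₀) hb2'
    rw [hx1, hrR] at h1
    have h3 : (R*Real.cos φ₀)^2 + (R*Real.sin φ₀)^2 = R^2 := by
      linear_combination (R^2) * Real.sin_sq_add_cos_sq φ₀
    have hsq : (Real.sqrt (1-e^2) * Real.sin u₀ / 2)^2 = (R * Real.sin φ₀)^2 := by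
      linear_combination h1 - h3
    exact (sq_eq_sq₀ (by positivity) (by positivity)).mp hsq
  have hXV := kXV he0 he1
  have hVd := kV_deriv he0 he1
  have hCd := kX_contDiff he0 he1
  have h0 := kX_ne he0 he1
  have hE := kEnergy he0 he1
  obtain ⟨hsol1, hvel1⟩ := arc_sol (kX e) (kV e) hCd hXV hVd h0 hE 1 0 ω (Or.inl rfl) hω
  obtain ⟨hsol2, hvel2⟩ := arc_sol (kX e) (kV e) hCd hXV hVd h0 hE (-1) Th ω' (Or.inr rfl) hω'
  have hdenpos := fun s => kg_denom_pos he0 he1 s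
  refine ⟨ω, ω', _, _, hω, hω', ⟨hsol1, ?_, ?_⟩, ⟨hsol2, ?_, ?_⟩, ?_, ?_, ?_, ?_, ?_, ?_⟩
  · -- interior left endpoint
    show kX e (1*(-ω)+0) = _
    rw [show (1:ℝ)*(-ω)+0 = -ω by ring]
    unfold kX
    rw [hkunegω, Real.cos_neg, Real.sin_neg]
    exact pt_congr hx1 (by linear_combination -hx2)
  · -- interior right endpoint
    show kX e (1*ω+0) = _
    rw [show (1:ℝ)*ω+0 = ω by ring]
    unfold kX
    rw [hkuω]
    exact pt_congr hx1 hx2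
  · -- exterior left endpoint
    show kX e ((-1)*(-ω')+Th) = _
    rw [show (-1:ℝ)*(-ω')+Th = 2*Th - ω by rw [hω'def]; ring]
    unfold kX
    rw [hku2]
    have hc2 : Real.cos (2*π - u₀) = Real.cos u₀ := by
      rw [Real.cos_sub, Real.cos_two_pi, Real.sin_two_pi]; ring
    have hs2 : Real.sin (2*π - u₀) = -Real.sin u₀ := by
      rw [Real.sin_sub, Real.cos_two_pi, Real.sin_two_pi]; ring
    rw [hc2, hs2]
    exact pt_congr hx1 (by linear_combination -hx2)
  · -- exterior right endpoint
    show kX e ((-1)*ω'+Th) = _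
    rw [show (-1:ℝ)*ω'+Th = ω by rw [hω'def]; ring]
    unfold kX
    rw [hkuω]
    exact pt_congr hx1 hx2
  · -- interior angular momentum positive
    unfold angMom
    have h00 : (0:ℝ) ∈ Icc (-ω) ω := ⟨by linarith, by linarith⟩
    rw [hvel1 0 h00]
    have e0 : (fun t => kX e (1*t+0)) 0 = kX e 0 := by norm_num
    rw [e0, show (1:ℝ)*0+0 = (0:ℝ) by norm_num, one_smul]
    have c1 : kX e 0 0 = (1-e)/2 := by
      show (Real.cos (ku e 0) - e)/2 = _
      rw [hku0, Real.cos_zero]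
    have c2 : kX e 0 1 = 0 := by
      show Real.sqrt (1-e^2) * Real.sin (ku e 0) / 2 = 0
      rw [hku0, Real.sin_zero]; ring
    have v0 : kV e 0 0 = 0 := by
      show -Real.sin (ku e 0) * (2*Real.sqrt 2 / (1 - e * Real.cos (ku e 0))) / 2 = 0
      rw [hku0, Real.sin_zero]; ring
    have v1 : kV e 0 1 = Real.sqrt (1-e^2) * Real.sqrt 2 / (1-e) := by
      show Real.sqrt (1-e^2) * (Real.cos (ku e 0) * (2*Real.sqrt 2 / (1 - e * Real.cos (ku e 0)))) / 2 = _
      rw [hku0, Real.cos_zero]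
      have h1 : 1 - e * 1 ≠ 0 := by intro h; nlinarith
      have h2 : 1 - e ≠ 0 := by intro h; nlinarith
      field_simp
    rw [c1, c2, v0, v1]
    have hfin : (1-e)/2 * (Real.sqrt (1-e^2) * Real.sqrt 2 / (1-e)) - 0 * 0
        = Real.sqrt (1-e^2) * Real.sqrt 2 / 2 := by
      have : (1:ℝ) - e ≠ 0 := by intro h; nlinarith
      field_simp
      ring
    rw [hfin]
    positivity
  · -- exterior angular momentum negative
    unfold angMom
    have h00 : (0:ℝ) ∈ Icc (-ω') ω' := ⟨by linarith, by linarith⟩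
    rw [hvel2 0 h00]
    have e0 : (fun t => kX e ((-1)*t+Th)) 0 = kX e Th := by norm_num
    rw [e0, show (-1:ℝ)*0+Th = Th by ring]
    have hvsm : (-1:ℝ) • kV e Th =
        pt ((-1) * (-Real.sin (ku e Th) * (2*Real.sqrt 2 / (1 - e * Real.cos (ku e Th))) / 2))
          ((-1) * (Real.sqrt (1-e^2) * (Real.cos (ku e Th) * (2*Real.sqrt 2 / (1 - e * Real.cos (ku e Th)))) / 2)) := by
      unfold kV; rw [smul_pt]
    rw [hvsm]
    have c1 : kX e Th 0 = (-1-e)/2 := by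
      show (Real.cos (ku e Th) - e)/2 = _
      rw [hkuTh, Real.cos_pi]
    have c2 : kX e Th 1 = 0 := by
      show Real.sqrt (1-e^2) * Real.sin (ku e Th) / 2 = 0
      rw [hkuTh, Real.sin_pi]; ring
    rw [c1, c2, pt_apply0', pt_apply1', hkuTh, Real.sin_pi, Real.cos_pi]
    have h1e : (1:ℝ) + e ≠ 0 := by intro h; nlinarith
    have hfin : (-1-e)/2 * ((-1) * (Real.sqrt (1-e^2) * (-1 * (2*Real.sqrt 2 / (1 - e * (-1)))) / 2))
        - 0 * ((-1) * (-0 * (2*Real.sqrt 2 / (1 - e * (-1))) / 2))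
        = -(Real.sqrt (1-e^2) * Real.sqrt 2 / 2) := by
      rw [show (1:ℝ) - e * (-1) = 1 + e by ring]
      field_simp
      ring
    rw [hfin]
    have : 0 < Real.sqrt (1-e^2) * Real.sqrt 2 / 2 := by positivity
    linarith
  · -- interior norm bound
    intro t ht
    show ‖kX e (1*t+0)‖ < R
    rw [show (1:ℝ)*t+0 = t by ring, kX_norm he0 he1 t, ← hrR]
    have h5 : ku e t < u₀ := by
      rw [← hkuω]; exact ku_strictMono he0 he1 ht.2
    have h6 : -u₀ < ku e t := by
      rw [← hkunegω]; exact ku_strictMono he0 he1 ht.1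
    have h7 : Real.cos u₀ < Real.cos (ku e t) := by
      rw [← Real.cos_abs (ku e t)]
      exact Real.cos_lt_cos_of_nonneg_of_le_pi (abs_nonneg _) hu0pi.le
        (abs_lt.mpr ⟨h6, h5⟩)
    nlinarith
  · -- exterior norm bound
    intro t ht
    show R < ‖kX e ((-1)*t+Th)‖
    rw [kX_norm he0 he1 _, ← hrR]
    have hs1 : ω < (-1)*t + Th := by
      have := ht.2; rw [hω'def] at this; linarith
    have hs2 : (-1)*t + Th < 2*Th - ω := by
      have := ht.1; rw [hω'def] at this; linarith
    have h5 : u₀ < ku e ((-1)*t + Th) := by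
      rw [← hkuω]; exact ku_strictMono he0 he1 hs1
    have h6 : ku e ((-1)*t + Th) < 2*π - u₀ := by
      rw [← hku2]; exact ku_strictMono he0 he1 hs2
    have h7 : Real.cos (ku e ((-1)*t + Th)) < Real.cos u₀ := by
      rcases le_or_gt (ku e ((-1)*t + Th)) π with h|h
      · exact Real.cos_lt_cos_of_nonneg_of_le_pi hu0pos.le h h5
      · have hc2 : Real.cos (ku e ((-1)*t + Th)) = Real.cos (2*π - ku e ((-1)*t + Th)) := by
          rw [Real.cos_sub, Real.cos_two_pi, Real.sin_two_pi]; ring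
        rw [hc2]
        exact Real.cos_lt_cos_of_nonneg_of_le_pi hu0pos.le (by linarith) (by linarith)
    nlinarith
  · -- interior midpoint norm
    show ‖kX e (1*0+0)‖ = (1-e)/2
    rw [show (1:ℝ)*0+0 = (0:ℝ) by norm_num, kX_norm he0 he1 0, hku0, Real.cos_zero]
    ring
  · -- exterior midpoint norm
    show ‖kX e ((-1)*0+Th)‖ = (1+e)/2
    rw [show (-1:ℝ)*0+Th = Th by ring, kX_norm he0 he1 Th, hkuTh, Real.cos_pi]
    ring


set_option maxHeartbeats 1000000 in
/-- Existence of the four Keplerian arcs when 1/2 < |p| = |q| = R < 1 and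
φ₀ ∈ (π - arcsin((1-R)/R), π) (Theorem teo-ex (iii), second case). -/
theorem four_arcs_large_radius_large_angle (R φ₀ : ℝ) (hR1 : 1/2 < R) (hR2 : R < 1)
    (hφ : φ₀ ∈ Ioo (π - arcsin ((1 - R)/R)) π)
    (p q : E2) (hp : p = pt (R * cos φ₀) (-(R * sin φ₀)))
    (hq : q = pt (R * cos φ₀) (R * sin φ₀)) :
    ∃ (ω₁ ω₂ ω₃ ω₄ : ℝ) (xint1 xint2 xext1 xext2 : ℝ → E2),
      0 < ω₁ ∧ 0 < ω₂ ∧ 0 < ω₃ ∧ 0 < ω₄ ∧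
      IsKeplerSolPQ ω₁ p q xint1 ∧ 0 < angMom ω₁ xint1 ∧
        (∀ t ∈ Ioo (-ω₁) ω₁, ‖xint1 t‖ < R) ∧
      IsKeplerSolPQ ω₂ p q xint2 ∧ 0 < angMom ω₂ xint2 ∧
        (∀ t ∈ Ioo (-ω₂) ω₂, ‖xint2 t‖ < R) ∧
      IsKeplerSolPQ ω₃ p q xext1 ∧ angMom ω₃ xext1 < 0 ∧
        (∀ t ∈ Ioo (-ω₃) ω₃, R < ‖xext1 t‖) ∧
      IsKeplerSolPQ ω₄ p q xext2 ∧ angMom ω₄ xext2 < 0 ∧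
        (∀ t ∈ Ioo (-ω₄) ω₄, R < ‖xext2 t‖) ∧
      ‖xext1 0‖ < ‖xext2 0‖ ∧ ‖xint2 0‖ < ‖xint1 0‖ := by
  obtain ⟨hφ1, hφ2⟩ := hφ
  have hR0 : (0:ℝ) < R := by linarith
  have h2R : (0:ℝ) < 2*R - 1 := by linarith
  set v := (1 - R)/R with hvdef
  have hv0 : 0 < v := div_pos (by linarith) hR0
  have hv1 : v < 1 := by rw [hvdef, div_lt_one hR0]; linarith
  have hva : 0 < arcsin v := Real.arcsin_pos.mpr hv0
  have hvb : arcsin v ≤ π/2 := Real.arcsin_le_pi_div_two v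
  have hpi2 : π/2 < φ₀ := by linarith
  have hφ0pos : 0 < φ₀ := by linarith [Real.pi_pos]
  have hsin : 0 < Real.sin φ₀ := Real.sin_pos_of_pos_of_lt_pi hφ0pos hφ2
  have hcos : Real.cos φ₀ < 0 :=
    Real.cos_neg_of_pi_div_two_lt_of_lt hpi2 (by linarith [Real.pi_pos])
  have hcosgt : -1 < Real.cos φ₀ := by
    have h := Real.cos_lt_cos_of_nonneg_of_le_pi hφ0pos.le le_rfl hφ2
    rwa [Real.cos_pi] at h
  have hsinlt : Real.sin φ₀ < v := by
    have hmem1 : π - φ₀ ∈ Icc (-(π/2)) (π/2) := ⟨by linarith, by linarith⟩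
    have hmem2 : arcsin v ∈ Icc (-(π/2)) (π/2) := ⟨by linarith, hvb⟩
    have h := Real.strictMonoOn_sin hmem1 hmem2 (by linarith)
    rwa [Real.sin_pi_sub, Real.sin_arcsin (by linarith) hv1.le] at h
  have hRs : R * Real.sin φ₀ < 1 - R := by
    have h := mul_lt_mul_of_pos_left hsinlt hR0
    rwa [hvdef, mul_div_cancel₀ _ (ne_of_gt hR0)] at h
  have hD : 0 < R^2*Real.cos φ₀^2 - (2*R-1) := by
    have key : 0 < (1 - R - R*Real.sin φ₀) * (1 - R + R*Real.sin φ₀) :=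
      mul_pos (by linarith) (by nlinarith)
    nlinarith [Real.sin_sq_add_cos_sq φ₀]
  set s := Real.sqrt (R^2*Real.cos φ₀^2 - (2*R-1)) with hsdef
  have hs2 : s^2 = R^2*Real.cos φ₀^2 - (2*R-1) := Real.sq_sqrt hD.le
  have hspos : 0 < s := Real.sqrt_pos.mpr hD
  have hRc1 : -1 < R * Real.cos φ₀ := by nlinarith
  -- e₋ > 2R - 1 (hence e₋ > 0), e₊ < 1
  have hRc2 : 2*R - 1 < -(R*Real.cos φ₀) := by
    have h1 : (2*R-1)^2 < (R*(-Real.cos φ₀))^2 := by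
      nlinarith [hD, h2R, mul_pos h2R (show (0:ℝ) < 2 - 2*R by linarith)]
    nlinarith [h1, h2R, mul_pos hR0 (neg_pos.mpr hcos)]
  have hM : 0 < -(R*Real.cos φ₀) - (2*R-1) := by linarith
  have hemlt : 2*R - 1 < -(R*Real.cos φ₀) - s := by
    have hp3 : 0 < (2*R-1)*R*(1 + Real.cos φ₀) := by
      apply mul_pos (mul_pos h2R hR0); linarith
    nlinarith [hs2, hspos, hM, hp3]
  have heplt : -(R*Real.cos φ₀) + s < 1 := by
    have hp3 : 0 < R*(1 + Real.cos φ₀) := by apply mul_pos hR0; linarith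
    nlinarith [hs2, hspos, hRc1, hp3]
  have hquadm : (-(R*Real.cos φ₀) - s)^2 + 2*R*Real.cos φ₀*(-(R*Real.cos φ₀) - s) + 2*R - 1 = 0 := by
    linear_combination hs2
  have hquadp : (-(R*Real.cos φ₀) + s)^2 + 2*R*Real.cos φ₀*(-(R*Real.cos φ₀) + s) + 2*R - 1 = 0 := by
    linear_combination hs2
  obtain ⟨ωa, ωb, xia, xea, hωa, hωb, hia, hea, hma, hmb, hna, hnb, hia0, hea0⟩ :=
    arcs_for_e R φ₀ (-(R*Real.cos φ₀) - s) hR1 hR2 hsin (by linarith) (by linarith) hemlt hquadm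
  obtain ⟨ωc, ωd, xic, xec, hωc, hωd, hic, hec, hmc, hmd, hnc, hnd, hic0, hec0⟩ :=
    arcs_for_e R φ₀ (-(R*Real.cos φ₀) + s) hR1 hR2 hsin (by linarith) heplt (by linarith) hquadp
  rw [← hp, ← hq] at hia hea hic hec
  refine ⟨ωa, ωc, ωb, ωd, xia, xic, xea, xec, hωa, hωc, hωb, hωd,
    hia, hma, hna, hic, hmc, hnc, hea, hmb, hnb, hec, hmd, hnd, ?_, ?_⟩
  · rw [hea0, hec0]; linarith
  · rw [hic0, hia0]; linarith
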